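/- arXiv:2112.04062 — 3 statements merged into one kernel-verified Lean document; each statement's English description precedes it below -/
import Mathlib

section
/- The bright–bright rogue-wave short-wave component satisfies the short-wave equation of the Yajima–Oikawa system: for every (x,t) ∈ ℝ², i·∂S_brw/∂t (x,t) + (1/2)·∂²S_brw/∂x² (x,t) + S_brw(x,t)·L_brw1(x,t) = 0. -/
/-- The bright-bright rogue-wave short-wave component of the Yajima-Oikawa system. -/
noncomputable def S_brw (x t : ℝ) : ℂ :=
  (-3 * Complex.I * t + 3 * Complex.I * x + 3 * t ^ 2 + 3 * t * x + 3 * x ^ 2 - 2) /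
    (3 * t ^ 2 + 3 * t * x + 3 * x ^ 2 + 1)

/-- The bright-bright rogue-wave long-wave component of the Yajima-Oikawa system. -/
noncomputable def L_brw1 (x t : ℝ) : ℝ :=
  3 * (3 * t ^ 2 - 6 * t * x - 6 * x ^ 2 + 2) / (3 * t ^ 2 + 3 * t * x + 3 * x ^ 2 + 1) ^ 2

lemma cast_hasDerivAt (y : ℝ) : HasDerivAt (fun y : ℝ => (y : ℂ)) 1 y := by
  simpa using (hasDerivAt_id y).ofReal_comp

lemma hquad (a b c : ℂ) (y : ℝ) :
    HasDerivAt (fun y : ℝ => a * (y : ℂ) ^ 2 + b * y + c) (2 * a * y + b) y := by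
  have hc := cast_hasDerivAt y
  have h1 : HasDerivAt (fun y : ℝ => a * (y : ℂ) ^ 2) (2 * a * y) y := by
    have h2 : HasDerivAt (fun y : ℝ => (y : ℂ) * (y : ℂ)) ((y : ℂ) + (y : ℂ)) y := by
      have h := hc.mul hc; simp only [one_mul, mul_one] at h; exact h
    have h3 := h2.const_mul a
    have hfun : (fun y : ℝ => a * (y : ℂ) ^ 2) = fun y : ℝ => a * ((y : ℂ) * (y : ℂ)) := by
      funext y; ring
    rw [hfun]
    exact h3.congr_deriv (by ring)
  have h2 : HasDerivAt (fun y : ℝ => b * (y : ℂ)) b y := by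
    simpa using hc.const_mul b
  simpa using (h1.add h2).add_const c

lemma hlin (b c : ℂ) (y : ℝ) :
    HasDerivAt (fun y : ℝ => b * (y : ℂ) + c) b y := by
  simpa using ((cast_hasDerivAt y).const_mul b).add_const c

set_option maxHeartbeats 4000000 in
/-- The bright-bright rogue wave satisfies the short-wave equation
`i S_t + (1/2) S_xx + S L = 0` of the Yajima-Oikawa system. -/
theorem S_brw_satisfies_short_wave_equation :
    ∀ x t : ℝ,
      Complex.I * deriv (fun t' => S_brw x t') t
        + (1 / 2 : ℂ) * deriv (deriv fun x' => S_brw x' t) x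
        + S_brw x t * (L_brw1 x t : ℂ) = 0 := by
  intro x t
  set I := Complex.I with hI
  -- positivity of the real denominator
  have h0 : ∀ u v : ℝ, (0:ℝ) < 3 * u ^ 2 + 3 * u * v + 3 * v ^ 2 + 1 := by
    intro u v
    nlinarith [sq_nonneg (u + v), sq_nonneg u, sq_nonneg v]
  have hcast : ∀ u v : ℝ, ((3 * u ^ 2 + 3 * u * v + 3 * v ^ 2 + 1 : ℝ) : ℂ) ≠ 0 := by
    intro u v
    exact_mod_cast (h0 u v).ne'
  -- nonvanishing in the two syntactic forms we use
  have hdx : ∀ y : ℝ, (3 * (y : ℂ) ^ 2 + 3 * (t : ℂ) * y + (3 * (t : ℂ) ^ 2 + 1)) ≠ 0 := by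
    intro y
    have := hcast y t
    intro h; apply this; rw [← h]; push_cast; ring
  have hdt : ∀ y : ℝ, (3 * (y : ℂ) ^ 2 + 3 * (x : ℂ) * y + (3 * (x : ℂ) ^ 2 + 1)) ≠ 0 := by
    intro y
    have := hcast y x
    intro h; apply this; rw [← h]; push_cast; ring
  -- time derivative
  have hfunt : (fun t' : ℝ => S_brw x t') =
      fun y : ℝ => (3 * (y : ℂ) ^ 2 + (3 * (x : ℂ) - 3 * I) * y + (3 * I * x + 3 * (x:ℂ) ^ 2 - 2)) /
        (3 * (y : ℂ) ^ 2 + 3 * (x : ℂ) * y + (3 * (x : ℂ) ^ 2 + 1)) := by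
    funext y; rw [S_brw, hI]; congr 1 <;> ring
  have hSt : HasDerivAt (fun t' : ℝ => S_brw x t')
      (((2 * 3 * (t:ℂ) + (3 * (x : ℂ) - 3 * I)) * (3 * (t : ℂ) ^ 2 + 3 * (x : ℂ) * t + (3 * (x : ℂ) ^ 2 + 1))
        - (3 * (t : ℂ) ^ 2 + (3 * (x : ℂ) - 3 * I) * t + (3 * I * x + 3 * (x:ℂ) ^ 2 - 2)) * (2 * 3 * (t:ℂ) + 3 * (x:ℂ)))
        / (3 * (t : ℂ) ^ 2 + 3 * (x : ℂ) * t + (3 * (x : ℂ) ^ 2 + 1)) ^ 2) t := by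
    rw [hfunt]
    exact (hquad 3 (3 * (x : ℂ) - 3 * I) (3 * I * x + 3 * (x:ℂ) ^ 2 - 2) t).div
      (hquad 3 (3 * (x : ℂ)) (3 * (x : ℂ) ^ 2 + 1) t) (hdt t)
  -- first space derivative, at every point
  have hfunx : (fun x' : ℝ => S_brw x' t) =
      fun y : ℝ => (3 * (y : ℂ) ^ 2 + (3 * (t : ℂ) + 3 * I) * y + (-3 * I * t + 3 * (t:ℂ) ^ 2 - 2)) /
        (3 * (y : ℂ) ^ 2 + 3 * (t : ℂ) * y + (3 * (t : ℂ) ^ 2 + 1)) := by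
    funext y; rw [S_brw, hI]; congr 1 <;> ring
  have hSx : ∀ y : ℝ, HasDerivAt (fun x' : ℝ => S_brw x' t)
      (((2 * 3 * (y:ℂ) + (3 * (t : ℂ) + 3 * I)) * (3 * (y : ℂ) ^ 2 + 3 * (t : ℂ) * y + (3 * (t : ℂ) ^ 2 + 1))
        - (3 * (y : ℂ) ^ 2 + (3 * (t : ℂ) + 3 * I) * y + (-3 * I * t + 3 * (t:ℂ) ^ 2 - 2)) * (2 * 3 * (y:ℂ) + 3 * (t:ℂ)))
        / (3 * (y : ℂ) ^ 2 + 3 * (t : ℂ) * y + (3 * (t : ℂ) ^ 2 + 1)) ^ 2) y := by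
    intro y
    rw [hfunx]
    exact (hquad 3 (3 * (t : ℂ) + 3 * I) (-3 * I * t + 3 * (t:ℂ) ^ 2 - 2) y).div
      (hquad 3 (3 * (t : ℂ)) (3 * (t : ℂ) ^ 2 + 1) y) (hdx y)
  have hderiv1 : deriv (fun x' : ℝ => S_brw x' t) =
      fun y : ℝ => ((2 * 3 * (y:ℂ) + (3 * (t : ℂ) + 3 * I)) * (3 * (y : ℂ) ^ 2 + 3 * (t : ℂ) * y + (3 * (t : ℂ) ^ 2 + 1))
        - (3 * (y : ℂ) ^ 2 + (3 * (t : ℂ) + 3 * I) * y + (-3 * I * t + 3 * (t:ℂ) ^ 2 - 2)) * (2 * 3 * (y:ℂ) + 3 * (t:ℂ)))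
        / ((3 * (y : ℂ) ^ 2 + 3 * (t : ℂ) * y + (3 * (t : ℂ) ^ 2 + 1)) * (3 * (y : ℂ) ^ 2 + 3 * (t : ℂ) * y + (3 * (t : ℂ) ^ 2 + 1))) := by
    funext y
    rw [(hSx y).deriv]; ring
  -- second space derivative
  have hP : HasDerivAt (fun y : ℝ =>
      ((2 * 3 * (y:ℂ) + (3 * (t : ℂ) + 3 * I)) * (3 * (y : ℂ) ^ 2 + 3 * (t : ℂ) * y + (3 * (t : ℂ) ^ 2 + 1))
        - (3 * (y : ℂ) ^ 2 + (3 * (t : ℂ) + 3 * I) * y + (-3 * I * t + 3 * (t:ℂ) ^ 2 - 2)) * (2 * 3 * (y:ℂ) + 3 * (t:ℂ))))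
      ((2 * 3) * (3 * (x : ℂ) ^ 2 + 3 * (t : ℂ) * x + (3 * (t : ℂ) ^ 2 + 1))
        + (2 * 3 * (x:ℂ) + (3 * (t : ℂ) + 3 * I)) * (2 * 3 * (x:ℂ) + 3 * (t:ℂ))
        - ((2 * 3 * (x:ℂ) + (3 * (t : ℂ) + 3 * I)) * (2 * 3 * (x:ℂ) + 3 * (t:ℂ))
          + (3 * (x : ℂ) ^ 2 + (3 * (t : ℂ) + 3 * I) * x + (-3 * I * t + 3 * (t:ℂ) ^ 2 - 2)) * (2 * 3))) x := by
    exact ((hlin (2 * 3) (3 * (t : ℂ) + 3 * I) x).mul (hquad 3 (3 * (t : ℂ)) (3 * (t : ℂ) ^ 2 + 1) x)).sub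
      ((hquad 3 (3 * (t : ℂ) + 3 * I) (-3 * I * t + 3 * (t:ℂ) ^ 2 - 2) x).mul (hlin (2 * 3) (3 * (t:ℂ)) x))
  have hQ : HasDerivAt (fun y : ℝ =>
      ((3 * (y : ℂ) ^ 2 + 3 * (t : ℂ) * y + (3 * (t : ℂ) ^ 2 + 1)) * (3 * (y : ℂ) ^ 2 + 3 * (t : ℂ) * y + (3 * (t : ℂ) ^ 2 + 1))))
      ((2 * 3 * (x:ℂ) + 3 * (t:ℂ)) * (3 * (x : ℂ) ^ 2 + 3 * (t : ℂ) * x + (3 * (t : ℂ) ^ 2 + 1))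
        + (3 * (x : ℂ) ^ 2 + 3 * (t : ℂ) * x + (3 * (t : ℂ) ^ 2 + 1)) * (2 * 3 * (x:ℂ) + 3 * (t:ℂ))) x :=
    (hquad 3 (3 * (t : ℂ)) (3 * (t : ℂ) ^ 2 + 1) x).mul (hquad 3 (3 * (t : ℂ)) (3 * (t : ℂ) ^ 2 + 1) x)
  have hQne : ((3 * (x : ℂ) ^ 2 + 3 * (t : ℂ) * x + (3 * (t : ℂ) ^ 2 + 1)) * (3 * (x : ℂ) ^ 2 + 3 * (t : ℂ) * x + (3 * (t : ℂ) ^ 2 + 1))) ≠ 0 :=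
    mul_ne_zero (hdx x) (hdx x)
  have hS2 := hP.div hQ hQne
  simp only [Pi.div_def] at hS2
  rw [hSt.deriv, hderiv1, hS2.deriv, S_brw, L_brw1, hI]
  have hd1 := hdx x
  have hd2 : (3 * (t:ℂ) ^ 2 + 3 * (t:ℂ) * x + 3 * (x:ℂ) ^ 2 + 1) ≠ 0 := by
    have := hcast t x
    intro h; apply this; rw [← h]; push_cast; ring
  have hd3 := hdt t
  push_cast
  rw [show (3 * (t:ℂ) ^ 2 + 3 * (x : ℂ) * t + (3 * (x : ℂ) ^ 2 + 1)) = 3 * (t:ℂ) ^ 2 + 3 * (t:ℂ) * x + 3 * (x:ℂ) ^ 2 + 1 by ring,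
    show (3 * (x : ℂ) ^ 2 + 3 * (t : ℂ) * x + (3 * (t : ℂ) ^ 2 + 1)) = 3 * (t:ℂ) ^ 2 + 3 * (t:ℂ) * x + 3 * (x:ℂ) ^ 2 + 1 by ring]
  field_simp
  ring_nf
  simp only [Complex.I_sq]
  ring
end

section
/- The short-wave bright rogue wave attains its maximum amplitude 2 at the origin: for all real x, t one has |S_brw(x,t)| ≤ 2, and |S_brw(0,0)| = 2. -/
lemma S_brw_abs_le (x t : ℝ) : ‖S_brw x t‖ ≤ 2 := by
  have hD : (0:ℝ) < 3 * t ^ 2 + 3 * t * x + 3 * x ^ 2 + 1 := by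
    nlinarith [sq_nonneg (t + x), sq_nonneg t, sq_nonneg x]
  have hsq : Complex.normSq (S_brw x t) ≤ 4 := by
    have hden : (3 * (t:ℂ) ^ 2 + 3 * t * x + 3 * x ^ 2 + 1)
        = ((3 * t ^ 2 + 3 * t * x + 3 * x ^ 2 + 1 : ℝ) : ℂ) := by push_cast; ring
    have hnum : (-3 * Complex.I * t + 3 * Complex.I * x + 3 * t ^ 2 + 3 * t * x + 3 * x ^ 2 - 2 : ℂ)
        = ((3 * t ^ 2 + 3 * t * x + 3 * x ^ 2 - 2 : ℝ) : ℂ)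
          + ((3 * x - 3 * t : ℝ) : ℂ) * Complex.I := by push_cast; ring
    rw [S_brw, hden, hnum, Complex.normSq_div, Complex.normSq_ofReal,
      Complex.normSq_add_mul_I, div_le_iff₀ (by positivity)]
    nlinarith [sq_nonneg (t + x), sq_nonneg (3*t^2 + 3*t*x + 3*x^2), sq_nonneg t, sq_nonneg x]
  have h := Real.sqrt_le_sqrt hsq
  rw [Complex.norm_def]
  calc Real.sqrt (Complex.normSq (S_brw x t)) ≤ Real.sqrt 4 := h
    _ = 2 := by
        rw [show (4:ℝ) = 2 ^ 2 by norm_num, Real.sqrt_sq (by norm_num)]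

/-- The short-wave bright rogue wave attains its maximum amplitude 2 at the origin. -/
theorem S_brw_max_amplitude :
    (∀ x t : ℝ, ‖S_brw x t‖ ≤ 2) ∧ ‖S_brw 0 0‖ = 2 := by
  refine ⟨S_brw_abs_le, ?_⟩
  simp [S_brw]
end

section
/- The short-wave bright rogue wave has the plane |S| = 1 as its background wave: |S_brw(x,t)| tends to 1 as (x,t) leaves every compact subset of ℝ² (i.e., the limit of |S_brw| along the cocompact filter of ℝ² is 1). -/
lemma D_pos (x t : ℝ) : 0 < 3 * t ^ 2 + 3 * t * x + 3 * x ^ 2 + 1 := by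
  nlinarith [sq_nonneg (t + x), sq_nonneg t, sq_nonneg x]

lemma key (x t : ℝ) :
    |‖S_brw x t‖ - 1| ≤ (3 * |x| + 3 * |t| + 3) / ((3/2) * (x^2 + t^2) + 1) := by
  have hD := D_pos x t
  have hDc : ((3 * t ^ 2 + 3 * t * x + 3 * x ^ 2 + 1 : ℝ) : ℂ) ≠ 0 := by
    exact_mod_cast hD.ne'
  have hDc' : ((3 : ℂ) * t ^ 2 + 3 * t * x + 3 * x ^ 2 + 1) ≠ 0 := by
    push_cast at hDc; exact hDc
  have hsub : S_brw x t - 1 =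
      ((-3 * Complex.I * t + 3 * Complex.I * x - 3) : ℂ) /
        ((3 * t ^ 2 + 3 * t * x + 3 * x ^ 2 + 1 : ℝ) : ℂ) := by
    rw [S_brw, div_sub_one hDc']
    push_cast
    ring_nf
  have h1 : |‖S_brw x t‖ - 1| ≤ ‖S_brw x t - 1‖ := by
    have := abs_norm_sub_norm_le (S_brw x t) 1
    simpa using this
  have h2 : ‖S_brw x t - 1‖
      ≤ (3 * |x| + 3 * |t| + 3) / (3 * t ^ 2 + 3 * t * x + 3 * x ^ 2 + 1) := by
    rw [hsub, norm_div, Complex.norm_real, Real.norm_eq_abs, abs_of_pos hD]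
    apply div_le_div_of_nonneg_right ?_ hD.le |>.trans_eq rfl
    · calc ‖-3 * Complex.I * t + 3 * Complex.I * x - 3‖
          ≤ ‖-3 * Complex.I * t‖ + ‖3 * Complex.I * x‖
            + ‖(-3 : ℂ)‖ := by
            have := norm_add_le (-3 * Complex.I * t + 3 * Complex.I * x) (-3 : ℂ)
            have h' := norm_add_le (-3 * Complex.I * (t:ℂ)) (3 * Complex.I * x)
            calc ‖-3 * Complex.I * t + 3 * Complex.I * x - 3‖
                ≤ ‖-3 * Complex.I * t + 3 * Complex.I * x‖ + ‖(-3 : ℂ)‖ := by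
                  simpa [sub_eq_add_neg] using this
              _ ≤ _ := by linarith
        _ = 3 * |t| + 3 * |x| + 3 := by
            simp [norm_mul, Complex.norm_real]
        _ = 3 * |x| + 3 * |t| + 3 := by ring
  refine h1.trans (h2.trans ?_)
  apply div_le_div_of_nonneg_left ?_ ?_ ?_
  · positivity
  · positivity
  · nlinarith [sq_nonneg (t + x)]

/-- The short-wave bright rogue wave has the plane `|S| = 1` as its background wave:
`|S_brw(x,t)| → 1` as `(x,t)` leaves every compact subset of `ℝ²`. -/
theorem S_brw_background_amplitude :
    Filter.Tendsto (fun p : ℝ × ℝ => ‖S_brw p.1 p.2‖)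
      (Filter.cocompact (ℝ × ℝ)) (nhds 1) := by
  rw [tendsto_iff_dist_tendsto_zero]
  have hφ : Filter.Tendsto (fun r : ℝ => (6 * r + 3) / ((3/2) * r ^ 2 + 1))
      Filter.atTop (nhds 0) := by
    have h9 : Filter.Tendsto (fun r : ℝ => (9:ℝ) / r) Filter.atTop (nhds 0) :=
      tendsto_const_nhds.div_atTop Filter.tendsto_id
    apply squeeze_zero' ?_ ?_ h9
    · filter_upwards [Filter.eventually_ge_atTop 0] with r hr; positivity
    · filter_upwards [Filter.eventually_ge_atTop 1] with r hr
      rw [div_le_div_iff₀ (by positivity) (by linarith)]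
      nlinarith
  have hmain := hφ.comp (tendsto_norm_cocompact_atTop (E := ℝ × ℝ))
  apply squeeze_zero (fun p => dist_nonneg) ?_ hmain
  intro p
  rw [Real.dist_eq]
  refine (key p.1 p.2).trans ?_
  have hx : |p.1| ≤ ‖p‖ := by simpa using norm_fst_le p
  have ht : |p.2| ≤ ‖p‖ := by simpa using norm_snd_le p
  have hsq : ‖p‖ ^ 2 ≤ p.1 ^ 2 + p.2 ^ 2 := by
    have hnp : ‖p‖ = max |p.1| |p.2| := by simp [Prod.norm_def, Real.norm_eq_abs]
    rcases max_cases |p.1| |p.2| with ⟨h, _⟩ | ⟨h, _⟩ <;> rw [hnp, h] <;>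
      nlinarith [sq_nonneg p.1, sq_nonneg p.2, sq_abs p.1, sq_abs p.2]
  exact div_le_div₀ (by positivity) (by linarith) (by positivity) (by nlinarith)
end
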